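/- arXiv:1701.01187 — 2 statements merged into one kernel-verified Lean document; each statement's English description precedes it below -/
import Mathlib

section
/- Let B be a finite group, let G be a non-abelian simple subgroup of B, and let N ≤ M be normal subgroups of B. Suppose that G ∩ N = 1, that every element of G commutes with every element of N (so GN = G × N), and that the conjugation action of G on M/N is trivial (equivalently, [G, M] ≤ N). Then G ∩ M = 1 and every element of G commutes with every element of M; that is, GM = G × M. -/
/-!
A non-abelian simple group `G` is perfect and centreless. Since `[[G, M], G] ≤ [N, G] = 1`, the
three subgroups lemma gives `[[G, G], M] = 1`, i.e. `[G, M] = 1` by perfectness. Then `G ∩ M` is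
central in `G`, hence trivial.
-/

/-- The alternating group of degree `n`. -/
abbrev Alt (n : ℕ) : Type := ↥(alternatingGroup (Fin n))

/-- A group is non-abelian simple. -/
def IsNonabelianSimple (G : Type*) [Group G] : Prop :=
  IsSimpleGroup G ∧ ∃ a b : G, a * b ≠ b * a

/-- `E` is a double cover of `G`: a perfect central extension of `G`
(i.e. a covering group of `G`) with `|E| = 2⋅|G|`. -/
def IsDoubleCover (E : Type*) (G : Type*) [Group E] [Group G] : Prop :=
  commutator E = ⊤ ∧ Nat.card E = 2 * Nat.card G ∧
    ∃ φ : E →* G, Function.Surjective φ ∧ φ.ker ≤ Subgroup.center E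

namespace IsNonabelianSimple

variable {G : Type*} [Group G]

theorem not_isMulCommutative (hG : IsNonabelianSimple G) : ¬IsMulCommutative G := by
  obtain ⟨-, a, b, hab⟩ := hG
  exact fun h => hab (h.is_comm.comm a b)

theorem commutator_eq_top (hG : IsNonabelianSimple G) : commutator G = ⊤ :=
  (hG.1.eq_bot_or_eq_top_of_normal _ inferInstance).resolve_left
    fun h => hG.not_isMulCommutative ((commutator_eq_bot_iff G).mp h)

theorem center_eq_bot (hG : IsNonabelianSimple G) : Subgroup.center G = ⊥ :=
  (hG.1.eq_bot_or_eq_top_of_normal _ inferInstance).resolve_right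
    fun h => hG.not_isMulCommutative (Subgroup.center_eq_top_iff.mp h)

end IsNonabelianSimple

namespace Subgroup

variable {B : Type*} [Group B] {H K : Subgroup B}

theorem commutator_self_eq_self_of_commutator_eq_top (hH : _root_.commutator H = ⊤) :
    ⁅H, H⁆ = H := by
  rw [← H.map_subtype_commutator, hH, ← MonoidHom.range_eq_map, H.range_subtype]

theorem commutator_eq_bot_of_commutator_commutator_eq_bot (hH : ⁅H, H⁆ = H)
    (h : ⁅⁅H, K⁆, H⁆ = ⊥) : ⁅H, K⁆ = ⊥ := by
  have h' : ⁅⁅K, H⁆, H⁆ = ⊥ := by rwa [commutator_comm K H]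
  simpa only [hH] using commutator_commutator_eq_bot_of_rotate h h'

theorem inf_eq_bot_of_commutator_eq_bot (hH : center H = ⊥) (h : ⁅H, K⁆ = ⊥) :
    H ⊓ K = ⊥ := by
  refine eq_bot_iff.mpr fun x ⟨hxH, hxK⟩ => ?_
  have hHK : H ≤ centralizer K := commutator_eq_bot_iff_le_centralizer.mp h
  have hxc : (⟨x, hxH⟩ : H) ∈ center H := mem_center_iff.mpr fun y =>
    Subtype.ext (mem_centralizer_iff.mp (hHK y.2) x hxK).symm
  rw [hH, mem_bot] at hxc
  exact mem_bot.mpr (congrArg Subtype.val hxc)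

end Subgroup

open Subgroup in
theorem stmt13_general {B : Type*} [Group B] (G N M : Subgroup B)
    (hGsimple : IsNonabelianSimple ↥G)
    (hcomm : ∀ g ∈ G, ∀ n ∈ N, g * n = n * g)
    (htriv : ⁅G, M⁆ ≤ N) :
    G ⊓ M = ⊥ ∧ ∀ g ∈ G, ∀ m ∈ M, g * m = m * g := by
  have hNG : ⁅N, G⁆ = ⊥ := commutator_eq_bot_iff_le_centralizer.mpr fun n hn =>
    mem_centralizer_iff.mpr fun g hg => hcomm g hg n hn
  have hGM : ⁅G, M⁆ = ⊥ :=
    commutator_eq_bot_of_commutator_commutator_eq_bot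
      (commutator_self_eq_self_of_commutator_eq_top hGsimple.commutator_eq_top)
      (le_bot_iff.mp (hNG ▸ commutator_mono htriv le_rfl))
  refine ⟨inf_eq_bot_of_commutator_eq_bot hGsimple.center_eq_bot hGM, fun g hg m hm => ?_⟩
  exact (mem_centralizer_iff.mp (commutator_eq_bot_iff_le_centralizer.mp hGM hg) m hm).symm

theorem stmt13 {B : Type*} [Finite B] [Group B] (G N M : Subgroup B)
    (hGsimple : IsNonabelianSimple ↥G)
    (hNM : N ≤ M) (hN : N.Normal) (hM : M.Normal)
    (hGN : G ⊓ N = ⊥)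
    (hcomm : ∀ g ∈ G, ∀ n ∈ N, g * n = n * g)
    (htriv : ⁅G, M⁆ ≤ N) :
    G ⊓ M = ⊥ ∧ ∀ g ∈ G, ∀ m ∈ M, g * m = m * g :=
  stmt13_general G N M hGsimple hcomm htriv
end

section
/- Let G be a finite non-abelian simple group with G ≇ A₅, let Γ be a connected pentavalent symmetric G-vertex-transitive graph with G ≤ Aut(Γ) and G not normal in Aut(Γ), and let R be the radical of Aut(Γ) with R ≠ 1. Then R has at least three orbits on V(Γ). -/
open Equiv Pointwise

/-- The automorphism group of a simple graph `Γ`, realized as a subgroup of the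
permutation group of the vertex set. -/
def SimpleGraph.autGroup {V : Type*} (Γ : SimpleGraph V) : Subgroup (Equiv.Perm V) where
  carrier := { g | ∀ u v : V, Γ.Adj (g u) (g v) ↔ Γ.Adj u v }
  one_mem' := by intro u v; simp
  mul_mem' := by
    intro a b ha hb u v
    simp only [Set.mem_setOf_eq] at *
    rw [Equiv.Perm.mul_apply, Equiv.Perm.mul_apply, ha, hb]
  inv_mem' := by
    intro a ha u v
    simpa using (ha (a⁻¹ u) (a⁻¹ v)).symm

/-- A subgroup `G` of the permutation group of the vertices acts
vertex-transitively on `Γ`. -/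
def SimpleGraph.IsVertexTransitive {V : Type*} (Γ : SimpleGraph V)
    (G : Subgroup (Equiv.Perm V)) : Prop :=
  ∀ u v : V, ∃ g ∈ G, g u = v

/-- A subgroup `G` of the permutation group of the vertices acts transitively on
the arcs (ordered pairs of adjacent vertices) of `Γ`. -/
def SimpleGraph.IsArcTransitive {V : Type*} (Γ : SimpleGraph V)
    (G : Subgroup (Equiv.Perm V)) : Prop :=
  ∀ u₁ v₁ u₂ v₂ : V, Γ.Adj u₁ v₁ → Γ.Adj u₂ v₂ → ∃ g ∈ G, g u₁ = u₂ ∧ g v₁ = v₂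

/-- A subgroup `G` of the permutation group of the vertices acts regularly on the
vertices of `Γ`. -/
def SimpleGraph.IsRegularSubgroup {V : Type*} (Γ : SimpleGraph V)
    (G : Subgroup (Equiv.Perm V)) : Prop :=
  ∀ u v : V, ∃! g : G, (g : Equiv.Perm V) u = v

/-- `H` is a normal subgroup of the subgroup `K`. -/
def NormalIn {P : Type*} [Group P] (H K : Subgroup P) : Prop :=
  H ≤ K ∧ ∀ k ∈ K, ∀ h ∈ H, k * h * k⁻¹ ∈ H

/-- `R` is the radical (the largest solvable normal subgroup) of the subgroup `K`. -/
def IsRadicalOf {P : Type*} [Group P] (R K : Subgroup P) : Prop :=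
  NormalIn R K ∧ IsSolvable ↥R ∧
    ∀ S : Subgroup P, NormalIn S K → IsSolvable ↥S → S ≤ R

/-- The stabilizer of a vertex `v` in a subgroup `K` of the permutation group. -/
def vertexStab {V : Type*} (K : Subgroup (Equiv.Perm V)) (v : V) : Subgroup (Equiv.Perm V) :=
  K ⊓ MulAction.stabilizer (Equiv.Perm V) v

/-- The projective special linear group `PSL(2,8)`. -/
abbrev PSLTwoEight : Type :=
  Matrix.SpecialLinearGroup (Fin 2) (GaloisField 2 3) ⧸
    Subgroup.center (Matrix.SpecialLinearGroup (Fin 2) (GaloisField 2 3))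

/-- The projective symplectic group `PSp(8,2)`. -/
abbrev PSpEightTwo : Type :=
  ↥(Matrix.symplecticGroup (Fin 4) (ZMod 2)) ⧸
    Subgroup.center ↥(Matrix.symplecticGroup (Fin 4) (ZMod 2))

/-- The standard quadratic form of minus type in dimension `8` over the field
with two elements. -/
def quadFormMinus8 (x : Fin 8 → ZMod 2) : ZMod 2 :=
  x 0 * x 1 + x 2 * x 3 + x 4 * x 5 + (x 6 * x 6 + x 6 * x 7 + x 7 * x 7)

/-- The orthogonal group `O⁻₈(2)` of the minus-type quadratic form in dimension `8`
over the field with two elements. -/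
def OMinusEightTwo : Subgroup (GL (Fin 8) (ZMod 2)) where
  carrier := { u | ∀ x : Fin 8 → ZMod 2,
    quadFormMinus8 ((u : Matrix (Fin 8) (Fin 8) (ZMod 2)).mulVec x) = quadFormMinus8 x }
  one_mem' := by
    intro x
    simp [Matrix.one_mulVec]
  mul_mem' := by
    intro a b ha hb x
    simp only [Set.mem_setOf_eq] at *
    rw [Units.val_mul, ← Matrix.mulVec_mulVec, ha, hb]
  inv_mem' := by
    intro a ha x
    simp only [Set.mem_setOf_eq] at *
    have h := ha ((↑a⁻¹ : Matrix (Fin 8) (Fin 8) (ZMod 2)).mulVec x)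
    rw [Matrix.mulVec_mulVec, ← Units.val_mul, mul_inv_cancel, Units.val_one,
      Matrix.one_mulVec] at h
    exact h.symm

/-- The simple orthogonal group `Ω⁻₈(2)`: the derived subgroup of `O⁻₈(2)`. -/
abbrev OmegaMinusEightTwo : Type := ↥(commutator ↥OMinusEightTwo)

/-- `R` has at least three orbits on the vertex set. -/
def HasAtLeastThreeOrbits {V : Type*} (R : Subgroup (Equiv.Perm V)) : Prop :=
  ∃ v₁ v₂ v₃ : V,
    (∀ g ∈ R, g v₁ ≠ v₂) ∧ (∀ g ∈ R, g v₁ ≠ v₃) ∧ (∀ g ∈ R, g v₂ ≠ v₃)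

/-- `R` and `G` generate an internal direct product `R × G`. -/
def IsInternalDirectProduct {P : Type*} [Group P] (R G : Subgroup P) : Prop :=
  R ⊓ G = ⊥ ∧ ∀ r ∈ R, ∀ g ∈ G, r * g = g * r

/-!
Suppose `R` has at most two orbits. The simple group `G` permutes the `R`-orbits, and a
permutation group of at most two points is abelian, so `G` fixes every orbit; as `G` is
transitive, so is `R`. Then `Aut Γ = R · (Aut Γ)_v`, and since `G ∩ R` is a solvable normal
subgroup of `G`, the group `G` embeds in `Aut Γ ⧸ R`, a quotient of the vertex stabiliser
`(Aut Γ)_v`. Passing to the kernel of the action on the neighbourhood of a fixed vertex either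
keeps `G` as a section or exhibits it as a section of the local action; by connectivity the
kernels cannot keep `G` forever, so `G` is a section of `Sym(Γ(u)) ≅ S₅` for some vertex `u`.
The sign character leaves `G` a section of `A₅`, and a proper subgroup of `A₅` has index at
least `5`, hence order at most `12`, too small for a nonabelian simple group: `G ≅ A₅`.
-/

def IsSubquotient (Q X : Type*) [Group Q] [Group X] : Prop :=
  ∃ (L : Subgroup X) (f : L →* Q), Function.Surjective f

section Subquotient

variable {Q X Y : Type*} [Group Q] [Group X] [Group Y]

theorem IsSubquotient.of_surjective (f : X →* Q) (hf : Function.Surjective f) :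
    IsSubquotient Q X :=
  ⟨⊤, f.comp (⊤ : Subgroup X).subtype, fun q =>
    let ⟨x, hx⟩ := hf q
    ⟨⟨x, Subgroup.mem_top x⟩, hx⟩⟩

theorem IsSubquotient.of_injective (h : IsSubquotient Q X) (ψ : X →* Y)
    (hψ : Function.Injective ψ) : IsSubquotient Q Y := by
  obtain ⟨L, f, hf⟩ := h
  exact ⟨L.map ψ, f.comp (L.equivMapOfInjective ψ hψ).symm.toMonoidHom,
    hf.comp (MulEquiv.surjective _)⟩

theorem IsSubquotient.of_injective_of_surjective (ψ : Q →* Y) (hψ : Function.Injective ψ)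
    (φ : X →* Y) (hφ : Function.Surjective φ) : IsSubquotient Q X :=
  ⟨ψ.range.comap φ, (MonoidHom.ofInjective hψ).symm.toMonoidHom.comp (φ.subgroupComap ψ.range),
    (MonoidHom.ofInjective hψ).symm.surjective.comp
      (φ.subgroupComap_surjective_of_surjective _ hφ)⟩

theorem IsSubquotient.mul_comm (h : IsSubquotient Q X) (hX : ∀ a b : X, a * b = b * a)
    (a b : Q) : a * b = b * a := by
  obtain ⟨L, f, hf⟩ := h
  obtain ⟨x, rfl⟩ := hf a
  obtain ⟨y, rfl⟩ := hf b
  rw [← map_mul, ← map_mul]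
  exact congrArg f (Subtype.ext (hX x y))

/-- The image of `ker ρ` is normal in `Q`; when it is trivial, `f` factors through
`X ⧸ ker ρ ≃* range ρ`. -/
theorem IsSimpleGroup.surjective_comp_ker_subtype_or_isSubquotient [IsSimpleGroup Q]
    (f : X →* Q) (hf : Function.Surjective f) (ρ : X →* Y) :
    Function.Surjective (f.comp ρ.ker.subtype) ∨ IsSubquotient Q Y := by
  rcases (ρ.normal_ker.map f hf).eq_bot_or_eq_top with hbot | htop
  · have hle : ρ.ker ≤ f.ker := fun x hx =>
      (Subgroup.mem_bot.mp (hbot ▸ Subgroup.mem_map_of_mem f hx :))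
    exact Or.inr ⟨ρ.range, (QuotientGroup.lift ρ.ker f hle).comp
      (QuotientGroup.quotientKerEquivRange ρ).symm.toMonoidHom,
      (QuotientGroup.lift_surjective_of_surjective _ _ hf hle).comp (MulEquiv.surjective _)⟩
  · refine Or.inl fun q => ?_
    obtain ⟨x, hx, rfl⟩ := htop ▸ Subgroup.mem_top q
    exact ⟨⟨x, hx⟩, rfl⟩

end Subquotient

theorem IsSimpleGroup.injective_of_surjective {X Q : Type*} [Group X] [Group Q]
    [IsSimpleGroup X] [Nontrivial Q] (f : X →* Q) (hf : Function.Surjective f) :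
    Function.Injective f := by
  refine (MonoidHom.ker_eq_bot_iff f).mp ((f.normal_ker.eq_bot_or_eq_top).resolve_right ?_)
  intro htop
  obtain ⟨a, b, hab⟩ := exists_pair_ne Q
  obtain ⟨x, rfl⟩ := hf a
  obtain ⟨y, rfl⟩ := hf b
  have hx : x ∈ f.ker := htop ▸ Subgroup.mem_top x
  have hy : y ∈ f.ker := htop ▸ Subgroup.mem_top y
  exact hab (by rw [f.mem_ker.mp hx, f.mem_ker.mp hy])

section SmallSimpleGroups

variable {Q : Type*} [Group Q] [IsSimpleGroup Q]

/-- The action on the cosets of a proper subgroup is faithful, since its kernel is a proper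
normal subgroup. -/
theorem IsSimpleGroup.card_le_factorial_index [Finite Q] {P : Subgroup Q} (hP : P ≠ ⊤) :
    Nat.card Q ≤ P.index.factorial := by
  have hcore : P.normalCore = ⊥ :=
    (P.normalCore_normal.eq_bot_or_eq_top).resolve_right fun h =>
      hP (top_le_iff.mp (h ▸ P.normalCore_le))
  have hinj : Function.Injective (MulAction.toPermHom Q (Q ⧸ P)) := by
    rw [← MonoidHom.ker_eq_bot_iff, ← P.normalCore_eq_ker, hcore]
  calc Nat.card Q ≤ Nat.card (Perm (Q ⧸ P)) := Nat.card_le_card_of_injective _ hinj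
    _ = P.index.factorial := by rw [Nat.card_perm]; rfl

theorem IsSimpleGroup.mul_comm_of_card_eq_prime_pow [Finite Q] (p : ℕ) [Fact p.Prime] {n : ℕ}
    (h : Nat.card Q = p ^ n) (a b : Q) : a * b = b * a :=
  have := (IsPGroup.of_card h).isNilpotent
  IsSimpleGroup.comm_iff_isSolvable.mpr inferInstance a b

theorem IsSimpleGroup.card_le_factorial_of_card_eq_prime_pow_mul [Finite Q] (p : ℕ)
    [Fact p.Prime] {n m : ℕ} (h : Nat.card Q = p ^ n * m) (hm : 1 < m) :
    Nat.card Q ≤ m.factorial := by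
  obtain ⟨P, hP⟩ := Sylow.exists_subgroup_card_pow_prime p (h ▸ dvd_mul_right _ m)
  have hindex : P.index = m := by
    have := P.card_mul_index
    rw [hP, h] at this
    exact Nat.eq_of_mul_eq_mul_left (pow_pos (Fact.out : p.Prime).pos n) this
  have hne : P ≠ ⊤ := fun htop => by
    rw [htop, Subgroup.index_top] at hindex
    omega
  exact hindex ▸ IsSimpleGroup.card_le_factorial_index hne

/-- Orders `6`, `10` and `12` are handled by a Sylow subgroup of index `2`, `2` and `3`;
all other orders up to `12` are prime powers. -/
theorem IsSimpleGroup.mul_comm_of_card_le_twelve [Finite Q] (hQ : Nat.card Q ≤ 12)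
    (a b : Q) : a * b = b * a := by
  have := Fact.mk Nat.prime_five
  have := Fact.mk (by norm_num : (7).Prime)
  have := Fact.mk (by norm_num : (11).Prime)
  have hpos : 0 < Nat.card Q := Nat.card_pos
  interval_cases hcard : Nat.card Q
  · exact mul_comm_of_card_eq_prime_pow 2 (n := 0) hcard a b
  · exact mul_comm_of_card_eq_prime_pow 2 (n := 1) hcard a b
  · exact mul_comm_of_card_eq_prime_pow 3 (n := 1) hcard a b
  · exact mul_comm_of_card_eq_prime_pow 2 (n := 2) hcard a b
  · exact mul_comm_of_card_eq_prime_pow 5 (n := 1) hcard a b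
  · exact absurd (card_le_factorial_of_card_eq_prime_pow_mul 3 (n := 1) (m := 2) hcard
      (by norm_num)) (by simp [hcard, Nat.factorial])
  · exact mul_comm_of_card_eq_prime_pow 7 (n := 1) hcard a b
  · exact mul_comm_of_card_eq_prime_pow 2 (n := 3) hcard a b
  · exact mul_comm_of_card_eq_prime_pow 3 (n := 2) hcard a b
  · exact absurd (card_le_factorial_of_card_eq_prime_pow_mul 5 (n := 1) (m := 2) hcard
      (by norm_num)) (by simp [hcard, Nat.factorial])
  · exact mul_comm_of_card_eq_prime_pow 11 (n := 1) hcard a b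
  · exact absurd (card_le_factorial_of_card_eq_prime_pow_mul 2 (n := 2) (m := 3) hcard
      (by norm_num)) (by simp [hcard, Nat.factorial])

end SmallSimpleGroups

theorem IsNonabelianSimple.not_isSubquotient_of_mul_comm {Q X : Type*} [Group Q] [Group X]
    (hQ : IsNonabelianSimple Q) (hX : ∀ a b : X, a * b = b * a) : ¬ IsSubquotient Q X := by
  intro h
  obtain ⟨a, b, hab⟩ := hQ.2
  exact hab (h.mul_comm hX a b)

theorem IsNonabelianSimple.not_isSolvable {G : Type*} [Group G] (hG : IsNonabelianSimple G) :
    ¬ Group.IsSolvable G := by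
  have := hG.1
  obtain ⟨a, b, hab⟩ := hG.2
  exact fun h => hab (IsSimpleGroup.comm_iff_isSolvable.mpr h a b)

section SubgroupsOfSymmetricGroups

variable {α Q : Type*} [Fintype α] [DecidableEq α] [Group Q]

theorem IsSubquotient.alternatingGroup (hQ : IsNonabelianSimple Q)
    (h : IsSubquotient Q (Perm α)) : IsSubquotient Q (alternatingGroup α) := by
  obtain ⟨L, f, hf⟩ := h
  have := hQ.1
  let ρ : L →* ℤˣ := Perm.sign.comp L.subtype
  rcases IsSimpleGroup.surjective_comp_ker_subtype_or_isSubquotient f hf ρ with hker | hsign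
  · let ψ : ρ.ker →* _root_.alternatingGroup α :=
      (L.subtype.comp ρ.ker.subtype).codRestrict _ fun x => x.2
    refine (IsSubquotient.of_surjective _ hker).of_injective ψ fun x y hxy => ?_
    have hcoe := congrArg Subtype.val hxy
    exact L.subtype_injective.comp ρ.ker.subtype_injective hcoe
  · exact absurd hsign (hQ.not_isSubquotient_of_mul_comm _root_.mul_comm)

theorem nonempty_mulEquiv_alternatingGroup_of_isSubquotient (hα : Nat.card α = 5)
    (hQ : IsNonabelianSimple Q) (h : IsSubquotient Q (alternatingGroup α)) :
    Nonempty (Q ≃* alternatingGroup α) := by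
  obtain ⟨L, f, hf⟩ := h
  have := hQ.1
  have := alternatingGroup.isSimpleGroup hα.ge
  by_cases hL : L = ⊤
  · subst hL
    let f' := f.comp Subgroup.topEquiv.symm.toMonoidHom
    have hf' : Function.Surjective f' := hf.comp (MulEquiv.surjective _)
    exact ⟨(MulEquiv.ofBijective f' ⟨IsSimpleGroup.injective_of_surjective f' hf', hf'⟩).symm⟩
  · have hcard : Nat.card (alternatingGroup α) = 60 := by
      have : Nontrivial α := Finite.one_lt_card_iff_nontrivial.mp (by omega)
      rw [nat_card_alternatingGroup, hα]
      rfl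
    have hindex : 5 ≤ L.index := by
      by_contra! hlt
      have := (IsSimpleGroup.card_le_factorial_index hL).trans
        (Nat.factorial_le (Nat.le_of_lt_succ hlt))
      rw [hcard] at this
      norm_num [Nat.factorial] at this
    have hL12 : Nat.card L ≤ 12 := by
      have := L.card_mul_index
      rw [hcard] at this
      nlinarith
    have := Finite.of_surjective f hf
    have hQ12 : Nat.card Q ≤ 12 :=
      (Nat.le_of_dvd Nat.card_pos (Subgroup.card_dvd_of_surjective f hf)).trans hL12
    obtain ⟨a, b, hab⟩ := hQ.2
    exact absurd (IsSimpleGroup.mul_comm_of_card_le_twelve hQ12 a b) hab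

end SubgroupsOfSymmetricGroups

namespace SimpleGraph

variable {V : Type*} {Γ : SimpleGraph V}

theorem Preconnected.exists_adj_mem_of_notMem (hconn : Γ.Preconnected) {S : Set V} {u v : V}
    (hu : u ∈ S) (hv : v ∉ S) : ∃ p y, Γ.Adj p y ∧ p ∈ S ∧ y ∉ S := by
  obtain ⟨w⟩ := hconn u v
  obtain ⟨d, -, hd, hd'⟩ := w.exists_boundary_dart S hu hv
  exact ⟨d.fst, d.snd, d.adj, hd, hd'⟩

theorem vertexStab_autGroup_le_stabilizer_neighborSet (p : V) :
    vertexStab Γ.autGroup p ≤ MulAction.stabilizer (Perm V) (Γ.neighborSet p) := by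
  rintro k ⟨hk, hkp : k p = p⟩
  rw [MulAction.mem_stabilizer_set]
  intro x
  simp only [Perm.smul_def, mem_neighborSet]
  conv_lhs => rw [← hkp]
  exact hk p x

variable [Finite V] {Q : Type*} [Group Q] [IsSimpleGroup Q]

theorem Preconnected.exists_isSubquotient_perm_neighborSet_of_le_vertexStab
    (hconn : Γ.Preconnected) {v₀ : V} {K : Subgroup (Perm V)}
    (hK : K ≤ vertexStab Γ.autGroup v₀) (f : K →* Q) (hf : Function.Surjective f) :
    ∃ u, IsSubquotient Q (Perm (Γ.neighborSet u)) := by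
  induction K using WellFoundedLT.induction with
  | _ K ih =>
  obtain ⟨x, hx⟩ : ∃ x, ¬ K ≤ MulAction.stabilizer (Perm V) x := by
    by_contra! hfix
    have : Subsingleton K := ⟨fun k k' => Subtype.ext <| Equiv.ext fun x =>
      (hfix x k.2).trans (hfix x k'.2).symm⟩
    obtain ⟨a, b, hab⟩ := exists_pair_ne Q
    obtain ⟨k, rfl⟩ := hf a
    obtain ⟨k', rfl⟩ := hf b
    exact hab (congrArg f (Subsingleton.elim k k'))
  obtain ⟨p, y, hpy, hp, hy⟩ := hconn.exists_adj_mem_of_notMem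
    (S := {z | K ≤ MulAction.stabilizer (Perm V) z}) (hK.trans inf_le_right) hx
  have hKN : K ≤ MulAction.stabilizer (Perm V) (Γ.neighborSet p) :=
    (le_inf (hK.trans inf_le_left) hp).trans (vertexStab_autGroup_le_stabilizer_neighborSet p)
  let ρ : K →* Perm (Γ.neighborSet p) :=
    (MulAction.toPermHom _ _).comp (Subgroup.inclusion hKN)
  rcases IsSimpleGroup.surjective_comp_ker_subtype_or_isSubquotient f hf ρ with hker | hloc
  · have hlt : ρ.ker.map K.subtype < K := by
      refine lt_of_le_of_ne (Subgroup.map_subtype_le _) fun heq => hy fun k hk => ?_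
      obtain ⟨k', hk', rfl⟩ := heq ▸ hk
      exact congrArg Subtype.val (Perm.ext_iff.mp (ρ.mem_ker.mp hk') ⟨y, hpy⟩)
    exact ih _ hlt (hlt.le.trans hK)
      ((f.comp ρ.ker.subtype).comp
        (ρ.ker.equivMapOfInjective K.subtype K.subtype_injective).symm.toMonoidHom)
      (hker.comp (MulEquiv.surjective _))
  · exact ⟨p, hloc⟩

theorem Preconnected.exists_isSubquotient_perm_neighborSet (hconn : Γ.Preconnected) {v₀ : V}
    (h : IsSubquotient Q (vertexStab Γ.autGroup v₀)) :
    ∃ u, IsSubquotient Q (Perm (Γ.neighborSet u)) := by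
  obtain ⟨L, f, hf⟩ := h
  exact hconn.exists_isSubquotient_perm_neighborSet_of_le_vertexStab (Subgroup.map_subtype_le L)
    (f.comp (L.equivMapOfInjective _ (Subgroup.subtype_injective _)).symm.toMonoidHom)
    (hf.comp (MulEquiv.surjective _))

end SimpleGraph

section OrbitsOfNormalizedSubgroups

open MulAction

variable {V : Type*} {R G : Subgroup (Perm V)}

theorem orbitRel_apply_of_conj_mem {g : Perm V} (hg : ∀ r ∈ R, g * r * g⁻¹ ∈ R) {a b : V}
    (h : orbitRel R V a b) : orbitRel R V (g a) (g b) := by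
  obtain ⟨r, rfl⟩ := h
  exact ⟨⟨g * r * g⁻¹, hg r r.2⟩, by simp [Subgroup.smul_def, Perm.smul_def]⟩

variable (R G) in
def orbitQuotientPermHom (hRG : ∀ g ∈ G, ∀ r ∈ R, g * r * g⁻¹ ∈ R) :
    G →* Perm (orbitRel.Quotient R V) where
  toFun g :=
    { toFun := Quotient.map g fun _ _ => orbitRel_apply_of_conj_mem (hRG g g.2)
      invFun := Quotient.map (g⁻¹ : G) fun _ _ => orbitRel_apply_of_conj_mem (hRG _ (g⁻¹).2)
      left_inv := by rintro ⟨a⟩; exact congrArg (Quotient.mk _) (g.1.symm_apply_apply a)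
      right_inv := by rintro ⟨a⟩; exact congrArg (Quotient.mk _) (g.1.apply_symm_apply a) }
  map_one' := by ext ⟨a⟩; rfl
  map_mul' _ _ := by ext ⟨a⟩; rfl

theorem isPretransitive_of_not_hasAtLeastThreeOrbits [Finite V]
    (hRG : ∀ g ∈ G, ∀ r ∈ R, g * r * g⁻¹ ∈ R) (hG : IsNonabelianSimple G)
    (hGtrans : ∀ u v : V, ∃ g ∈ G, g u = v) (h : ¬ HasAtLeastThreeOrbits R) :
    IsPretransitive R V := by
  have := hG.1
  have hcard : Nat.card (orbitRel.Quotient R V) ≤ 2 := by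
    by_contra! hlt
    have := Fintype.ofFinite (orbitRel.Quotient R V)
    rw [Nat.card_eq_fintype_card] at hlt
    have hsep : ∀ a b : V, (Quotient.mk _ a : orbitRel.Quotient R V) ≠ Quotient.mk _ b →
        ∀ g ∈ R, g a ≠ b := fun a b hne g hg he =>
      hne (Quotient.sound (⟨⟨g, hg⟩, he⟩ : b ∈ orbit R a)).symm
    obtain ⟨⟨v₁⟩, ⟨v₂⟩, ⟨v₃⟩, h₁₂, h₁₃, h₂₃⟩ := Fintype.two_lt_card_iff.mp hlt
    exact h ⟨v₁, v₂, v₃, hsep _ _ h₁₂, hsep _ _ h₁₃, hsep _ _ h₂₃⟩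
  have := Perm.isMulCommutative_iff_card_le_two.mpr hcard
  let φ := orbitQuotientPermHom R G hRG
  rcases IsSimpleGroup.surjective_comp_ker_subtype_or_isSubquotient (MonoidHom.id G)
    Function.surjective_id φ with hker | hsub
  · refine ⟨fun u v => ?_⟩
    obtain ⟨g, hg, rfl⟩ := hGtrans u v
    obtain ⟨⟨k, hk⟩, rfl⟩ := hker ⟨g, hg⟩
    exact Quotient.exact (Perm.ext_iff.mp (φ.mem_ker.mp hk) (Quotient.mk _ u))
  · exact absurd hsub (hG.not_isSubquotient_of_mul_comm mul_comm')

end OrbitsOfNormalizedSubgroups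

theorem isSubquotient_vertexStab_of_isPretransitive {V : Type*} {K R G : Subgroup (Perm V)}
    (hRK : NormalIn R K) [Group.IsSolvable R] [MulAction.IsPretransitive R V] (hGK : G ≤ K)
    (hG : IsNonabelianSimple G) (v₀ : V) : IsSubquotient G (vertexStab K v₀) := by
  have := hG.1
  have : (R.subgroupOf K).Normal :=
    ⟨fun r hr k => Subgroup.mem_subgroupOf.mpr (hRK.2 k k.2 r (Subgroup.mem_subgroupOf.mp hr))⟩
  let π := QuotientGroup.mk' (R.subgroupOf K)
  refine IsSubquotient.of_injective_of_surjective (π.comp (Subgroup.inclusion hGK)) ?_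
    (π.comp (Subgroup.inclusion inf_le_left)) ?_
  · rw [← MonoidHom.ker_eq_bot_iff]
    refine (MonoidHom.normal_ker _).eq_bot_or_eq_top.resolve_right fun htop =>
      hG.not_isSolvable ?_
    have hGR : G ≤ R := fun g hg => by
      have hker : (⟨g, hg⟩ : G) ∈ (π.comp (Subgroup.inclusion hGK)).ker :=
        htop ▸ Subgroup.mem_top _
      exact Subgroup.mem_subgroupOf.mp ((QuotientGroup.eq_one_iff _).mp hker)
    exact Group.isSolvable_of_isSolvable_injective (Subgroup.inclusion_injective hGR)
  · rintro ⟨k⟩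
    obtain ⟨r, hr⟩ := MulAction.exists_smul_eq R v₀ ((k : Perm V)⁻¹ v₀)
    have hfix : ((k : Perm V) * r) v₀ = v₀ := by
      rw [Perm.mul_apply, show (r : Perm V) v₀ = (k : Perm V)⁻¹ v₀ from hr, ← Perm.mul_apply,
        mul_inv_cancel, Perm.one_apply]
    refine ⟨⟨k * r, K.mul_mem k.2 (hRK.1 r.2), hfix⟩, (QuotientGroup.eq.mpr ?_).symm⟩
    show (k : Perm V)⁻¹ * ((k : Perm V) * r) ∈ R
    rw [inv_mul_cancel_left]
    exact r.2

theorem stmt15_general {V : Type*} [Fintype V] (Γ : SimpleGraph V) [DecidableRel Γ.Adj]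
    (hconn : Γ.Connected) (hpent : Γ.IsRegularOfDegree 5)
    (G : Subgroup (Equiv.Perm V)) (hGle : G ≤ Γ.autGroup)
    (hGsimple : IsNonabelianSimple ↥G)
    (hGA5 : ¬ Nonempty (↥G ≃* Alt 5))
    (hGtrans : Γ.IsVertexTransitive G)
    (R : Subgroup (Equiv.Perm V)) (hR : IsRadicalOf R Γ.autGroup) :
    HasAtLeastThreeOrbits R := by
  classical
  by_contra hfew
  have := hGsimple.1
  have : Group.IsSolvable R := hR.2.1
  have := isPretransitive_of_not_hasAtLeastThreeOrbits (fun g hg => hR.1.2 g (hGle hg))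
    hGsimple hGtrans hfew
  obtain ⟨v₀⟩ := hconn.nonempty
  obtain ⟨u, hu⟩ := hconn.preconnected.exists_isSubquotient_perm_neighborSet
    (isSubquotient_vertexStab_of_isPretransitive hR.1 hGle hGsimple v₀)
  have hdeg : Fintype.card (Γ.neighborSet u) = 5 := by
    rw [SimpleGraph.card_neighborSet_eq_degree, hpent u]
  obtain ⟨e⟩ := nonempty_mulEquiv_alternatingGroup_of_isSubquotient
    (Nat.card_eq_fintype_card.trans hdeg) hGsimple (hu.alternatingGroup hGsimple)
  exact hGA5 ⟨e.trans (Fintype.equivFinOfCardEq hdeg).altCongrHom⟩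

theorem stmt15 {V : Type*} [Fintype V] (Γ : SimpleGraph V) [DecidableRel Γ.Adj]
    (hconn : Γ.Connected) (hpent : Γ.IsRegularOfDegree 5)
    (hsym : Γ.IsArcTransitive Γ.autGroup)
    (G : Subgroup (Equiv.Perm V)) (hGle : G ≤ Γ.autGroup)
    (hGsimple : IsNonabelianSimple ↥G)
    (hGA5 : ¬ Nonempty (↥G ≃* Alt 5))
    (hGtrans : Γ.IsVertexTransitive G)
    (hGnn : ¬ NormalIn G Γ.autGroup)
    (R : Subgroup (Equiv.Perm V)) (hR : IsRadicalOf R Γ.autGroup) (hRne : R ≠ ⊥) :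
    HasAtLeastThreeOrbits R :=
  stmt15_general Γ hconn hpent G hGle hGsimple hGA5 hGtrans R hR
end
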